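/- arXiv:1312.4387 — 2 statements merged into one kernel-verified Lean document; each statement's English description precedes it below -/
import Mathlib

section
/- Let R be a principal ideal domain, G an R-module, X a closed R-orientable topological manifold of dimension n, E and F real or complex vector bundles over X, L : E → F a bundle morphism, and c a characteristic class with values in H^k(·;G). If c(E) − c(F) ∉ im β^k ⊂ H^k(X;G), then the covering dimension of Σ(L) satisfies dim Σ(L) ≥ n − k. -/
/-!
Over the complement of `Σ(L)` the morphism `L` is an isomorphism, so by naturality `c(E)` and
`c(F)` restrict to the same class there; `Σ(L)` is closed because invertibility of `L` is an
open condition in local trivializations. If `H_k(X, X ∖ Σ; R)` vanished, every class of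
`H_k(X; R)` would come from `X ∖ Σ`, so `c(E) - c(F)` would pair trivially with `H_k(X; R)` and
hence lie in `im β^k` by the universal coefficient theorem. So `H_k(X, X ∖ Σ; R) ≠ 0`, and by
Poincaré–Lefschetz duality this group is `Ȟ^{n-k}(Σ; R)`, which forces `dim Σ ≥ n - k`.
-/

set_option autoImplicit false

noncomputable section

open Bundle Set Module

/-- `HasCovDimLE Y m` : every finite open cover of `Y` has a finite open refinement in which
no point is included in more than `m + 1` elements. -/
def HasCovDimLE (Y : Type) [TopologicalSpace Y] (m : ℕ) : Prop :=
  ∀ U : Finset (Set Y), (∀ u ∈ U, IsOpen u) → ⋃₀ (U : Set (Set Y)) = Set.univ →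
    ∃ V : Finset (Set Y), (∀ v ∈ V, IsOpen v) ∧ ⋃₀ (V : Set (Set Y)) = Set.univ ∧
      (∀ v ∈ V, ∃ u ∈ U, v ⊆ u) ∧
      ∀ y : Y, {v ∈ (V : Set (Set Y)) | y ∈ v}.ncard ≤ m + 1

/-- The covering dimension of a topological space, as an element of `ℕ∞` (`⊤` if no finite
`m` works). -/
def covDim (Y : Type) [TopologicalSpace Y] : ℕ∞ :=
  sInf {d : ℕ∞ | ∃ m : ℕ, d = (m : ℕ∞) ∧ HasCovDimLE Y m}

/-- The underlying graded groups of: relative singular homology `H_k(Y, A; R)` (with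
`H_k(Y; R) = H_k(Y, ∅; R)`), singular cohomology `H^k(Y; G)`, Čech cohomology `Ȟ^k(Y; R)`
and the `Ext`-term `Ext¹_R(H_{k-1}(Y; R), G)` of the universal coefficient theorem. -/
structure CohomologyData (R : Type) [CommRing R] (G : Type) [AddCommGroup G] [Module R G] where
  /-- relative singular homology `H_k(Y, A; R)` -/
  Hrel : ∀ (Y : Type) [TopologicalSpace Y], Set Y → ℤ → Type
  instHrelAdd : ∀ (Y : Type) [TopologicalSpace Y] (A : Set Y) (k : ℤ), AddCommGroup (Hrel Y A k)
  instHrelMod : ∀ (Y : Type) [TopologicalSpace Y] (A : Set Y) (k : ℤ), Module R (Hrel Y A k)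
  /-- singular cohomology `H^k(Y; G)` -/
  Hco : ∀ (Y : Type) [TopologicalSpace Y], ℤ → Type
  instHcoAdd : ∀ (Y : Type) [TopologicalSpace Y] (k : ℤ), AddCommGroup (Hco Y k)
  /-- Čech cohomology `Ȟ^k(Y; R)` -/
  Hcech : ∀ (Y : Type) [TopologicalSpace Y], ℤ → Type
  instHcechAdd : ∀ (Y : Type) [TopologicalSpace Y] (k : ℤ), AddCommGroup (Hcech Y k)
  /-- the group `Ext¹_R(H_{k-1}(Y; R), G)` appearing in the universal coefficient theorem -/
  ExtUCT : ∀ (Y : Type) [TopologicalSpace Y], ℤ → Type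
  instExtAdd : ∀ (Y : Type) [TopologicalSpace Y] (k : ℤ), AddCommGroup (ExtUCT Y k)

attribute [instance] CohomologyData.instHrelAdd CohomologyData.instHrelMod
  CohomologyData.instHcoAdd CohomologyData.instHcechAdd CohomologyData.instExtAdd

/-- An axiomatization of the package consisting of singular homology of pairs (with
coefficients in a PID `R`), singular cohomology (with coefficients in an `R`-module `G`) and
Čech cohomology (with coefficients in `R`), together with: functoriality, the Kronecker
pairing `α` (written `pair`, `α^k(η)(ξ) = ⟨η, ξ⟩`) and its naturality, the universal
coefficient exact sequence
`0 → Ext¹_R(H_{k-1}(Y;R), G) →^{β^k} H^k(Y;G) →^{α^k} Hom_R(H_k(Y;R), G) → 0`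
(exactness at `H^k` and vanishing of the `Ext`-term on free homology), the homology long
exact sequence of a pair (the part `im j_* = ker π_*`), and the fact that non-vanishing of
`Ȟ^m` of a compact Hausdorff space forces its covering dimension to be at least `m`.
All of these are classical facts about the (co)homology of topological spaces; they are the
only properties used in the paper. -/
structure Theory (R : Type) [CommRing R] [IsDomain R] [IsPrincipalIdealRing R]
    (G : Type) [AddCommGroup G] [Module R G] extends CohomologyData R G where
  /-- functoriality of relative homology for maps of pairs -/
  hmap : ∀ {Y Z : Type} [TopologicalSpace Y] [TopologicalSpace Z]
    (f : C(Y, Z)) {A : Set Y} {B : Set Z}, Set.MapsTo f A B →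
    ∀ k : ℤ, Hrel Y A k →ₗ[R] Hrel Z B k
  /-- contravariant functoriality of singular cohomology -/
  cmap : ∀ {Y Z : Type} [TopologicalSpace Y] [TopologicalSpace Z]
    (f : C(Y, Z)) (k : ℤ), Hco Z k →+ Hco Y k
  cmap_id : ∀ (Y : Type) [TopologicalSpace Y] (k : ℤ) (x : Hco Y k),
    cmap (ContinuousMap.id Y) k x = x
  /-- contravariant functoriality of Čech cohomology -/
  ccmap : ∀ {Y Z : Type} [TopologicalSpace Y] [TopologicalSpace Z]
    (f : C(Y, Z)) (k : ℤ), Hcech Z k →+ Hcech Y k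
  /-- the Kronecker pairing `α^k : H^k(Y;G) → Hom_R(H_k(Y;R), G)`, `α^k(η)(ξ) = ⟨η, ξ⟩` -/
  pair : ∀ (Y : Type) [TopologicalSpace Y] (k : ℤ),
    Hco Y k →+ (Hrel Y (∅ : Set Y) k →ₗ[R] G)
  /-- naturality of the Kronecker pairing: `⟨f^*η, ξ⟩ = ⟨η, f_*ξ⟩` -/
  pair_natural : ∀ {Y Z : Type} [TopologicalSpace Y] [TopologicalSpace Z] (f : C(Y, Z)) (k : ℤ)
    (η : Hco Z k) (ξ : Hrel Y (∅ : Set Y) k),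
    pair Y k (cmap f k η) ξ = pair Z k η (hmap f (Set.mapsTo_empty _ _) k ξ)
  /-- the map `β^k : Ext¹_R(H_{k-1}(Y;R), G) → H^k(Y;G)` of the universal coefficient
  theorem -/
  betaMap : ∀ (Y : Type) [TopologicalSpace Y] (k : ℤ), ExtUCT Y k →+ Hco Y k
  /-- exactness of the universal coefficient sequence at `H^k(Y;G)`: `ker α^k = im β^k` -/
  uct_exact : ∀ (Y : Type) [TopologicalSpace Y] (k : ℤ) (x : Hco Y k),
    pair Y k x = 0 ↔ x ∈ Set.range (betaMap Y k)
  /-- `Ext¹_R(H_{k-1}(Y;R), G)` vanishes if `H_{k-1}(Y;R)` is a free `R`-module -/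
  uct_free : ∀ (Y : Type) [TopologicalSpace Y] (k : ℤ),
    Module.Free R (Hrel Y (∅ : Set Y) (k - 1)) → ∀ z : ExtUCT Y k, betaMap Y k z = 0
  /-- exactness of the long exact homology sequence of the pair `(X, X ∖ A)` at `H_k(X)`:
  `π_* ξ = 0` iff `ξ` comes from `H_k(X ∖ A)` -/
  les_exact : ∀ (X : Type) [TopologicalSpace X] (A : Set X) (k : ℤ)
    (ξ : Hrel X (∅ : Set X) k),
    hmap (ContinuousMap.id X) (Set.mapsTo_empty _ _) k ξ = (0 : Hrel X Aᶜ k) ↔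
      ∃ ζ : Hrel (↥(Aᶜ)) (∅ : Set ↥(Aᶜ)) k,
        hmap (⟨Subtype.val, continuous_subtype_val⟩ : C(↥(Aᶜ), X))
          (Set.mapsTo_empty _ _) k ζ = ξ
  /-- if the Čech cohomology `Ȟ^m(Y;R)` of a compact Hausdorff space is non-trivial
  then its covering dimension is at least `m` -/
  dim_cech : ∀ (Y : Type) [TopologicalSpace Y] [CompactSpace Y] [T2Space Y] (m : ℕ),
    (∃ x : Hcech Y (m : ℤ), x ≠ 0) → (m : ℕ∞) ≤ covDim Y

/-- `X` is `R`-orientable (with respect to the homology theory `T`) if there is a compatible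
continuous choice `o(λ)` of generators of the local homology modules
`H_n(X, X ∖ {λ}; R) ≅ R`: i.e. an open cover `{U_i}` of `X` and classes
`μ_i ∈ H_n(X, X ∖ U_i; R)` restricting to `o(λ)` for every `λ ∈ U_i`. -/
def ROrientable {R : Type} [CommRing R] [IsDomain R] [IsPrincipalIdealRing R]
    {G : Type} [AddCommGroup G] [Module R G] (T : Theory R G)
    (n : ℕ) (X : Type) [TopologicalSpace X] : Prop :=
  ∃ o : ∀ x : X, T.Hrel X ({x}ᶜ) (n : ℤ),
    (∀ x, Submodule.span R {o x} = ⊤) ∧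
    ∃ (ι : Type) (U : ι → Set X), (∀ i, IsOpen (U i)) ∧ (∀ x, ∃ i, x ∈ U i) ∧
      ∃ μ : ∀ i, T.Hrel X ((U i)ᶜ) (n : ℤ),
        ∀ (i) (x) (hx : x ∈ U i),
          T.hmap (ContinuousMap.id X)
            ((Set.mapsTo_id _).mono_right
              (Set.compl_subset_compl.mpr (Set.singleton_subset_iff.mpr hx)))
            (n : ℤ) (μ i) = o x

/-- The full package: the (co)homology theories together with Poincaré–Lefschetz duality for
closed `R`-orientable topological `n`-manifolds (in the form of [Bredon, Cor. VI.8.4]: for a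
closed subset `A ⊆ X` there is a commutative square consisting of the duality isomorphisms
`Ȟ^{n-k}(X;R) ≅ H_k(X;R)` and `Ȟ^{n-k}(A;R) ≅ H_k(X, X∖A;R)`, the restriction
`i^* : Ȟ^{n-k}(X;R) → Ȟ^{n-k}(A;R)` and `π_* : H_k(X;R) → H_k(X, X∖A;R)`), and the fact
that every closed topological manifold is `R`-orientable when `2 = 0` in `R`. -/
structure GoodTheory (R : Type) [CommRing R] [IsDomain R] [IsPrincipalIdealRing R]
    (G : Type) [AddCommGroup G] [Module R G] extends Theory R G where
  /-- Poincaré–Lefschetz duality -/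
  pd : ∀ (n : ℕ) (X : Type) [TopologicalSpace X] [T2Space X]
    [ChartedSpace (EuclideanSpace ℝ (Fin n)) X] [CompactSpace X],
    ROrientable toTheory n X →
    ∀ (k : ℤ) (A : Set X), IsClosed A →
      ∃ (pdX : Hcech X ((n : ℤ) - k) ≃+ Hrel X (∅ : Set X) k)
        (pdA : Hcech (↥A) ((n : ℤ) - k) ≃+ Hrel X Aᶜ k),
        ∀ η : Hcech X ((n : ℤ) - k),
          pdA (ccmap (⟨Subtype.val, continuous_subtype_val⟩ : C(↥A, X)) ((n : ℤ) - k) η) =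
          hmap (ContinuousMap.id X) (Set.mapsTo_empty _ _) k (pdX η)
  /-- every closed topological manifold is `R`-orientable if `2 = 0` in `R` -/
  orient_two : (2 : R) = 0 → ∀ (n : ℕ) (X : Type) [TopologicalSpace X] [T2Space X]
    [ChartedSpace (EuclideanSpace ℝ (Fin n)) X] [CompactSpace X],
    ROrientable toTheory n X

/-- A (finite rank) vector bundle over the base `Y` with scalar field `𝕜`, packaged as a
structure: a model fibre `F` and a family of fibres `E y` together with all the data making
it a topological vector bundle. -/
structure VB (𝕜 : Type) [NontriviallyNormedField 𝕜] (Y : Type) [TopologicalSpace Y] :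
    Type 1 where
  /-- the model fibre -/
  F : Type
  [nF : NormedAddCommGroup F]
  [sF : NormedSpace 𝕜 F]
  [fdF : FiniteDimensional 𝕜 F]
  /-- the fibres -/
  E : Y → Type
  [aE : ∀ y, AddCommGroup (E y)]
  [mE : ∀ y, Module 𝕜 (E y)]
  [tE : ∀ y, TopologicalSpace (E y)]
  [tT : TopologicalSpace (Bundle.TotalSpace F E)]
  [fb : FiberBundle F E]
  [vb : VectorBundle 𝕜 F E]

attribute [instance] VB.nF VB.sF VB.fdF VB.aE VB.mE VB.tE VB.tT VB.fb VB.vb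

/-- A morphism of vector bundles over `X`: a fibrewise (continuous) linear map which is
continuous as a map of total spaces. -/
def IsBundleMorphism {𝕜 : Type} [NontriviallyNormedField 𝕜] {X : Type} [TopologicalSpace X]
    (V W : VB 𝕜 X) (L : ∀ x, V.E x →L[𝕜] W.E x) : Prop :=
  Continuous fun p : Bundle.TotalSpace V.F V.E =>
    (Bundle.TotalSpace.mk p.1 (L p.1 p.2) : Bundle.TotalSpace W.F W.E)

/-- The singular set `Σ(L) = {λ ∈ X | L_λ ∉ GL(E_λ, F_λ)}` of a bundle morphism `L`:
the set of points of the base over which `L` is not a linear isomorphism of fibres. -/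
def singularSet {𝕜 : Type} [NontriviallyNormedField 𝕜] {X : Type} [TopologicalSpace X]
    (V W : VB 𝕜 X) (L : ∀ x, V.E x →L[𝕜] W.E x) : Set X :=
  {x : X | ¬ Function.Bijective (L x)}

/-- An `H^k(·;G)`-valued characteristic class `c`: it assigns to every vector bundle over a
base `Y` a class `c(E) ∈ H^k(Y;G)`, such that `c(E₁) = f^* c(E₂)` whenever a continuous map
`f : Y → Z` is covered by a (fibrewise isomorphic, continuous) bundle map `E₁ → E₂`. -/
structure CharClass {R : Type} [CommRing R] [IsDomain R] [IsPrincipalIdealRing R]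
    {G : Type} [AddCommGroup G] [Module R G] (T : GoodTheory R G)
    (𝕜 : Type) [NontriviallyNormedField 𝕜] (k : ℤ) where
  /-- the value of the characteristic class on a bundle -/
  cls : ∀ (Y : Type) [TopologicalSpace Y], VB 𝕜 Y → T.Hco Y k
  /-- naturality with respect to bundle maps covering continuous maps -/
  natural : ∀ (Y Z : Type) [TopologicalSpace Y] [TopologicalSpace Z]
    (V : VB 𝕜 Y) (W : VB 𝕜 Z) (f : C(Y, Z)) (φ : ∀ y, V.E y ≃ₗ[𝕜] W.E (f y)),
    Continuous (fun p : Bundle.TotalSpace V.F V.E =>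
      (Bundle.TotalSpace.mk (f p.1) (φ p.1 p.2) : Bundle.TotalSpace W.F W.E)) →
    cls Y V = T.cmap f k (cls Z W)


theorem ContinuousLinearMap.bijective_iff_mem_range_coe {𝕜 E F : Type*}
    [NontriviallyNormedField 𝕜] [NormedAddCommGroup E] [NormedSpace 𝕜 E] [CompleteSpace E]
    [NormedAddCommGroup F] [NormedSpace 𝕜 F] [CompleteSpace F] (f : E →L[𝕜] F) :
    Function.Bijective f ↔ f ∈ range ((↑) : (E ≃L[𝕜] F) → E →L[𝕜] F) := by
  refine ⟨fun hf => ?_, ?_⟩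
  · exact ⟨.ofBijective f (LinearMap.ker_eq_bot.mpr hf.1) (LinearMap.range_eq_top.mpr hf.2),
      ContinuousLinearEquiv.coe_ofBijective _ _ _⟩
  · rintro ⟨e, rfl⟩
    exact e.bijective

theorem ContinuousOn.isOpen_setOf_bijective {𝕜 E F X : Type*}
    [NontriviallyNormedField 𝕜] [NormedAddCommGroup E] [NormedSpace 𝕜 E] [CompleteSpace E]
    [NormedAddCommGroup F] [NormedSpace 𝕜 F] [CompleteSpace F] [TopologicalSpace X]
    {g : X → E →L[𝕜] F} {U : Set X} (hg : ContinuousOn g U) (hU : IsOpen U) :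
    IsOpen {x ∈ U | Function.Bijective (g x)} := by
  simp_rw [ContinuousLinearMap.bijective_iff_mem_range_coe]
  exact hg.isOpen_inter_preimage hU ContinuousLinearEquiv.isOpen

section BundleMorphism

variable {𝕜 B F₁ F₂ : Type*} [NontriviallyNormedField 𝕜] [TopologicalSpace B]
  [NormedAddCommGroup F₁] [NormedSpace 𝕜 F₁] [NormedAddCommGroup F₂] [NormedSpace 𝕜 F₂]
  {E₁ : B → Type*} [∀ x, AddCommMonoid (E₁ x)] [∀ x, Module 𝕜 (E₁ x)]
  [∀ x, TopologicalSpace (E₁ x)] [TopologicalSpace (TotalSpace F₁ E₁)]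
  [FiberBundle F₁ E₁] [VectorBundle 𝕜 F₁ E₁]
  {E₂ : B → Type*} [∀ x, AddCommMonoid (E₂ x)] [∀ x, Module 𝕜 (E₂ x)]
  [∀ x, TopologicalSpace (E₂ x)] [TopologicalSpace (TotalSpace F₂ E₂)]
  [FiberBundle F₂ E₂] [VectorBundle 𝕜 F₂ E₂]
  {L : ∀ x, E₁ x →L[𝕜] E₂ x}

theorem continuousOn_inCoordinates [CompleteSpace 𝕜] [FiniteDimensional 𝕜 F₁]
    (hL : Continuous fun p : TotalSpace F₁ E₁ => (⟨p.1, L p.1 p.2⟩ : TotalSpace F₂ E₂))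
    (x₀ : B) :
    ContinuousOn (fun x => ContinuousLinearMap.inCoordinates F₁ E₁ F₂ E₂ x₀ x x₀ x (L x))
      ((trivializationAt F₁ E₁ x₀).baseSet ∩ (trivializationAt F₂ E₂ x₀).baseSet) := by
  set e := trivializationAt F₁ E₁ x₀
  set e' := trivializationAt F₂ E₂ x₀
  refine continuousOn_clm_apply.mpr fun v => ?_
  have hsymm : ContinuousOn (fun x => (⟨x, e.symm x v⟩ : TotalSpace F₁ E₁)) e.baseSet :=
    e.continuousOn_symm.comp (continuousOn_id.prodMk continuousOn_const)
      fun x hx => mk_mem_prod hx (mem_univ v)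
  have hcoord : ContinuousOn (fun x => (e' ⟨x, L x (e.symm x v)⟩).2) (e.baseSet ∩ e'.baseSet) :=
    continuous_snd.comp_continuousOn <| e'.continuousOn.comp
      ((hL.comp_continuousOn hsymm).mono inter_subset_left) fun x hx => e'.mem_source.mpr hx.2
  refine hcoord.congr fun x hx => ?_
  change e'.continuousLinearMapAt 𝕜 x (L x (e.symmL 𝕜 x v)) = _
  rw [e'.continuousLinearMapAt_apply_of_mem (R := 𝕜) hx.2, e.symmL_apply hx.1]

theorem bijective_inCoordinates_iff {x₀ x : B} (hx₁ : x ∈ (trivializationAt F₁ E₁ x₀).baseSet)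
    (hx₂ : x ∈ (trivializationAt F₂ E₂ x₀).baseSet) :
    Function.Bijective (ContinuousLinearMap.inCoordinates F₁ E₁ F₂ E₂ x₀ x x₀ x (L x)) ↔
      Function.Bijective (L x) := by
  rw [ContinuousLinearMap.inCoordinates_eq hx₁ hx₂, ContinuousLinearMap.coe_comp,
    ContinuousLinearMap.coe_comp, ContinuousLinearEquiv.coe_coe, ContinuousLinearEquiv.coe_coe,
    EquivLike.comp_bijective, EquivLike.bijective_comp]

theorem isOpen_setOf_bijective [CompleteSpace 𝕜] [FiniteDimensional 𝕜 F₁]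
    [FiniteDimensional 𝕜 F₂]
    (hL : Continuous fun p : TotalSpace F₁ E₁ => (⟨p.1, L p.1 p.2⟩ : TotalSpace F₂ E₂)) :
    IsOpen {x | Function.Bijective (L x)} := by
  have := FiniteDimensional.complete 𝕜 F₁
  have := FiniteDimensional.complete 𝕜 F₂
  refine isOpen_iff_forall_mem_open.mpr fun x₀ hx₀ => ?_
  have hx₀U : x₀ ∈ (trivializationAt F₁ E₁ x₀).baseSet ∩ (trivializationAt F₂ E₂ x₀).baseSet :=
    ⟨FiberBundle.mem_baseSet_trivializationAt' x₀, FiberBundle.mem_baseSet_trivializationAt' x₀⟩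
  refine ⟨_, fun x hx => ?_, (continuousOn_inCoordinates hL x₀).isOpen_setOf_bijective
    ((trivializationAt F₁ E₁ x₀).open_baseSet.inter (trivializationAt F₂ E₂ x₀).open_baseSet),
    hx₀U, (bijective_inCoordinates_iff hx₀U.1 hx₀U.2).mpr hx₀⟩
  exact (bijective_inCoordinates_iff hx.1.1 hx.1.2).mp hx.2

end BundleMorphism

theorem isClosed_singularSet {𝕜 : Type} [NontriviallyNormedField 𝕜] [CompleteSpace 𝕜]
    {X : Type} [TopologicalSpace X] {V W : VB 𝕜 X} {L : ∀ x, V.E x →L[𝕜] W.E x}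
    (hL : IsBundleMorphism V W L) : IsClosed (singularSet V W L) :=
  isOpen_compl_iff.mp <| by simpa [singularSet, compl_ofPred] using isOpen_setOf_bijective hL

namespace VB

variable {𝕜 : Type} [NontriviallyNormedField 𝕜] {X Y : Type} [TopologicalSpace X]
  [TopologicalSpace Y]

def pullback (V : VB 𝕜 X) (f : C(Y, X)) : VB 𝕜 Y where
  F := V.F
  E := f *ᵖ V.E
  aE := fun y => inferInstanceAs (AddCommGroup (V.E (f y)))
  vb := VectorBundle.pullback (F := V.F) (E := V.E) 𝕜 f

theorem continuous_pullback_lift (V : VB 𝕜 X) (f : C(Y, X)) :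
    Continuous fun p : TotalSpace (V.pullback f).F (V.pullback f).E =>
      (⟨f p.1, p.2⟩ : TotalSpace V.F V.E) :=
  Pullback.continuous_lift V.F V.E f

end VB

theorem IsBundleMorphism.pullback {𝕜 : Type} [NontriviallyNormedField 𝕜] {X Y : Type}
    [TopologicalSpace X] [TopologicalSpace Y] {V W : VB 𝕜 X} {L : ∀ x, V.E x →L[𝕜] W.E x}
    (hL : IsBundleMorphism V W L) (f : C(Y, X)) :
    IsBundleMorphism (V.pullback f) (W.pullback f) fun y => L (f y) :=
  (inducing_pullbackTotalSpaceEmbedding W.F W.E f).continuous_iff.mpr <|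
    (Pullback.continuous_proj V.F V.E f).prodMk (hL.comp (V.continuous_pullback_lift f))

namespace CharClass

variable {R : Type} [CommRing R] [IsDomain R] [IsPrincipalIdealRing R]
  {G : Type} [AddCommGroup G] [Module R G] {T : GoodTheory R G}
  {𝕜 : Type} [NontriviallyNormedField 𝕜] {k : ℤ} (c : CharClass T 𝕜 k)
  {X Y : Type} [TopologicalSpace X] [TopologicalSpace Y]

theorem cls_pullback (V : VB 𝕜 X) (f : C(Y, X)) :
    c.cls Y (V.pullback f) = T.cmap f k (c.cls X V) :=
  c.natural _ _ _ _ f (fun _ => LinearEquiv.refl 𝕜 _) (V.continuous_pullback_lift f)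

theorem cls_eq_of_bijective {V W : VB 𝕜 Y} {L : ∀ y, V.E y →L[𝕜] W.E y}
    (hL : IsBundleMorphism V W L) (hbij : ∀ y, Function.Bijective (L y)) :
    c.cls Y V = c.cls Y W := by
  rw [c.natural Y Y V W (ContinuousMap.id Y) (fun y => .ofBijective (L y).toLinearMap (hbij y)) hL,
    T.cmap_id]

theorem cmap_cls_sub_eq_zero {V W : VB 𝕜 X} {L : ∀ x, V.E x →L[𝕜] W.E x}
    (hL : IsBundleMorphism V W L) (f : C(Y, X)) (hbij : ∀ y, Function.Bijective (L (f y))) :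
    T.cmap f k (c.cls X V - c.cls X W) = 0 := by
  rw [map_sub, ← c.cls_pullback, ← c.cls_pullback, c.cls_eq_of_bijective (hL.pullback f) hbij,
    sub_self]

end CharClass

theorem Theory.mem_range_betaMap_of_cmap_eq_zero {R : Type} [CommRing R] [IsDomain R]
    [IsPrincipalIdealRing R] {G : Type} [AddCommGroup G] [Module R G] (T : Theory R G)
    {X : Type} [TopologicalSpace X] {k : ℤ} (A : Set X) [Subsingleton (T.Hrel X Aᶜ k)]
    {η : T.Hco X k} (hη : T.cmap (⟨Subtype.val, continuous_subtype_val⟩ : C(↥Aᶜ, X)) k η = 0) :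
    η ∈ range (T.betaMap X k) := by
  refine (T.uct_exact X k η).mp (LinearMap.ext fun ξ => ?_)
  obtain ⟨ζ, rfl⟩ := (T.les_exact X A k ξ).mp (Subsingleton.elim _ _)
  rw [← T.pair_natural, hη, map_zero, LinearMap.zero_apply, LinearMap.zero_apply]

theorem GoodTheory.toNat_sub_le_covDim {R : Type} [CommRing R] [IsDomain R]
    [IsPrincipalIdealRing R] {G : Type} [AddCommGroup G] [Module R G] (T : GoodTheory R G)
    {n : ℕ} {X : Type} [TopologicalSpace X] [T2Space X]
    [ChartedSpace (EuclideanSpace ℝ (Fin n)) X] [CompactSpace X]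
    (hor : ROrientable T.toTheory n X) {k : ℤ} {A : Set X} (hA : IsClosed A)
    [Nontrivial (T.Hrel X Aᶜ k)] :
    (((n : ℤ) - k).toNat : ℕ∞) ≤ covDim A := by
  rcases le_or_gt ((n : ℤ) - k) 0 with hk | hk
  · simp [Int.toNat_of_nonpos hk]
  have : CompactSpace A := isCompact_iff_compactSpace.mp hA.isCompact
  obtain ⟨-, pdA, -⟩ := T.pd n X hor k A hA
  rw [← Int.toNat_of_nonneg hk.le] at pdA
  obtain ⟨ξ, hξ⟩ := exists_ne (0 : T.Hrel X Aᶜ k)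
  exact T.dim_cech A _ ⟨pdA.symm ξ, by simpa using hξ⟩

theorem covDim_singularSet_ge_general
    {R : Type} [CommRing R] [IsDomain R] [IsPrincipalIdealRing R]
    {G : Type} [AddCommGroup G] [Module R G] (T : GoodTheory R G)
    (𝕜 : Type) [RCLike 𝕜]
    (n : ℕ) (X : Type) [TopologicalSpace X] [T2Space X]
    [ChartedSpace (EuclideanSpace ℝ (Fin n)) X] [CompactSpace X]
    (hor : ROrientable T.toTheory n X)
    (V W : VB 𝕜 X)
    (L : ∀ x, V.E x →L[𝕜] W.E x) (hL : IsBundleMorphism V W L)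
    (k : ℤ) (c : CharClass T 𝕜 k)
    (hc : c.cls X V - c.cls X W ∉ Set.range (T.betaMap X k)) :
    ((((n : ℤ) - k).toNat : ℕ∞)) ≤ covDim ↥(singularSet V W L) := by
  set A := singularSet V W L
  have : Nontrivial (T.Hrel X Aᶜ k) := by
    by_contra htriv
    have := not_nontrivial_iff_subsingleton.mp htriv
    exact hc <| T.mem_range_betaMap_of_cmap_eq_zero A <|
      c.cmap_cls_sub_eq_zero hL _ fun x => not_not.mp x.2
  exact T.toNat_sub_le_covDim hor (isClosed_singularSet hL)

/-- Let `R` be a principal ideal domain, `G` an `R`-module, `X` a closed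
`R`-orientable topological manifold of dimension `n`, `E` and `F` real or complex vector
bundles over `X`, `L : E → F` a bundle morphism and `c` a characteristic class with values
in `H^k(·;G)`. If `c(E) - c(F) ∉ im β^k ⊆ H^k(X;G)`, then the covering dimension of the
singular set satisfies `dim Σ(L) ≥ n - k`. -/
theorem covDim_singularSet_ge
    {R : Type} [CommRing R] [IsDomain R] [IsPrincipalIdealRing R]
    {G : Type} [AddCommGroup G] [Module R G] (T : GoodTheory R G)
    (𝕜 : Type) [RCLike 𝕜]
    (n : ℕ) (X : Type) [TopologicalSpace X] [T2Space X]
    [ChartedSpace (EuclideanSpace ℝ (Fin n)) X] [CompactSpace X]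
    (hor : ROrientable T.toTheory n X)
    (V W : VB 𝕜 X) (hrank : Module.finrank 𝕜 V.F = Module.finrank 𝕜 W.F)
    (L : ∀ x, V.E x →L[𝕜] W.E x) (hL : IsBundleMorphism V W L)
    (k : ℤ) (c : CharClass T 𝕜 k)
    (hc : c.cls X V - c.cls X W ∉ Set.range (T.betaMap X k)) :
    ((((n : ℤ) - k).toNat : ℕ∞)) ≤ covDim ↥(singularSet V W L) :=
  covDim_singularSet_ge_general T 𝕜 n X hor V W L hL k c hc
end
end

section
/- In the setting of the main theorem (X a closed R-orientable n-manifold, L : E → F a bundle morphism, c an H^k(·;G)-valued characteristic class with c(E) − c(F) ∉ im β^k), there exists a non-zero class ξ ∈ H_k(X;R) with ⟨c(E) − c(F), ξ⟩ ≠ 0 in G, and the image π_*ξ of ξ under the map H_k(X;R) → H_k(X, X∖Σ(L);R) induced by the inclusion of pairs is non-trivial. -/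
set_option autoImplicit false

noncomputable section

open Bundle Set Module

/-! Over `X ∖ Σ(L)` the morphism `L` is a fibrewise isomorphism, so by naturality of `c` the
class `c(E) - c(F)` restricts to zero there. By naturality of the Kronecker pairing,
`⟨c(E) - c(F), -⟩` then vanishes on the image of `H_k(X ∖ Σ(L))`, which is `ker π_*` by
exactness of the sequence of the pair. Since `c(E) - c(F) ∉ im β^k`, the universal coefficient
theorem provides `ξ` with `⟨c(E) - c(F), ξ⟩ ≠ 0`, and hence `π_* ξ ≠ 0`. -/

def VB.pull {𝕜 : Type} [NontriviallyNormedField 𝕜] {Y X : Type} [TopologicalSpace Y]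
    [TopologicalSpace X] (V : VB 𝕜 X) (f : C(Y, X)) : VB 𝕜 Y where
  F := V.F
  E := (f : Y → X) *ᵖ V.E
  aE := fun y => inferInstanceAs (AddCommGroup (V.E (f y)))
  mE := fun y => inferInstanceAs (Module 𝕜 (V.E (f y)))
  tE := inferInstance
  tT := inferInstance
  fb := FiberBundle.pullback f
  vb := VectorBundle.pullback (F := V.F) (E := V.E) 𝕜 f

namespace Theory

variable {R : Type} [CommRing R] [IsDomain R] [IsPrincipalIdealRing R]
  {G : Type} [AddCommGroup G] [Module R G] (T : Theory R G)
  {X : Type} [TopologicalSpace X] {k : ℤ}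

theorem exists_pair_ne_zero {η : T.Hco X k} (hη : η ∉ Set.range (T.betaMap X k)) :
    ∃ ξ, T.pair X k η ξ ≠ 0 := by
  by_contra! h
  exact hη ((T.uct_exact X k η).mp (LinearMap.ext h))

theorem hmap_ne_zero_of_pair_ne_zero {A : Set X} {η : T.Hco X k}
    (hη : T.cmap (⟨Subtype.val, continuous_subtype_val⟩ : C(↥Aᶜ, X)) k η = 0)
    {ξ : T.Hrel X ∅ k} (hξ : T.pair X k η ξ ≠ 0) :
    T.hmap (ContinuousMap.id X) (Set.mapsTo_empty _ _) k ξ ≠ (0 : T.Hrel X Aᶜ k) := by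
  intro hπ
  obtain ⟨ζ, rfl⟩ := (T.les_exact X A k ξ).mp hπ
  apply hξ
  rw [← T.pair_natural, hη, map_zero, LinearMap.zero_apply]

end Theory

namespace CharClass

variable {R : Type} [CommRing R] [IsDomain R] [IsPrincipalIdealRing R]
  {G : Type} [AddCommGroup G] [Module R G] {T : GoodTheory R G}
  {𝕜 : Type} [NontriviallyNormedField 𝕜] {k : ℤ} (c : CharClass T 𝕜 k)
  {X Y : Type} [TopologicalSpace X] [TopologicalSpace Y]

theorem cls_pull (V : VB 𝕜 X) (f : C(Y, X)) :
    c.cls Y (V.pull f) = T.cmap f k (c.cls X V) :=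
  c.natural Y X (V.pull f) V f (fun y => LinearEquiv.refl 𝕜 (V.E (f y)))
    (Pullback.continuous_lift V.F V.E f)

theorem cls_pull_eq_of_bijective {V W : VB 𝕜 X} {L : ∀ x, V.E x →L[𝕜] W.E x}
    (hL : IsBundleMorphism V W L) (f : C(Y, X)) (hf : ∀ y, Function.Bijective (L (f y))) :
    c.cls Y (V.pull f) = T.cmap f k (c.cls X W) :=
  c.natural Y X (V.pull f) W f
    (fun y => LinearEquiv.ofBijective (L (f y) : V.E (f y) →ₗ[𝕜] W.E (f y)) (hf y))
    (hL.comp (Pullback.continuous_lift V.F V.E f))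

theorem cmap_sub_eq_zero_of_bijective {V W : VB 𝕜 X} {L : ∀ x, V.E x →L[𝕜] W.E x}
    (hL : IsBundleMorphism V W L) (f : C(Y, X)) (hf : ∀ y, Function.Bijective (L (f y))) :
    T.cmap f k (c.cls X V - c.cls X W) = 0 := by
  rw [map_sub, ← c.cls_pull, ← c.cls_pull_eq_of_bijective hL f hf, sub_self]

end CharClass

theorem exists_homology_class_with_nontrivial_image_general
    {R : Type} [CommRing R] [IsDomain R] [IsPrincipalIdealRing R]
    {G : Type} [AddCommGroup G] [Module R G] (T : GoodTheory R G)
    (𝕜 : Type) [RCLike 𝕜]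
    (X : Type) [TopologicalSpace X]
    (V W : VB 𝕜 X)
    (L : ∀ x, V.E x →L[𝕜] W.E x) (hL : IsBundleMorphism V W L)
    (k : ℤ) (c : CharClass T 𝕜 k)
    (hc : c.cls X V - c.cls X W ∉ Set.range (T.betaMap X k)) :
    ∃ ξ : T.Hrel X (∅ : Set X) k, ξ ≠ 0 ∧
      T.pair X k (c.cls X V - c.cls X W) ξ ≠ 0 ∧
      T.hmap (ContinuousMap.id X) (Set.mapsTo_empty _ _) k ξ ≠
        (0 : T.Hrel X (singularSet V W L)ᶜ k) := by
  obtain ⟨ξ, hξ⟩ := T.exists_pair_ne_zero hc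
  have hrestrict := c.cmap_sub_eq_zero_of_bijective hL
    (⟨Subtype.val, continuous_subtype_val⟩ : C(↥(singularSet V W L)ᶜ, X))
    fun y => not_not.mp y.2
  exact ⟨ξ, fun h => hξ (h ▸ map_zero _), hξ, T.hmap_ne_zero_of_pair_ne_zero hrestrict hξ⟩

/-- In the setting of the main theorem (`X` a closed `R`-orientable
`n`-manifold, `L : E → F` a bundle morphism, `c` an `H^k(·;G)`-valued characteristic class
with `c(E) - c(F) ∉ im β^k`), there exists a non-zero class `ξ ∈ H_k(X;R)` with
`⟨c(E) - c(F), ξ⟩ ≠ 0` in `G`, whose image `π_*ξ` under the map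
`H_k(X;R) → H_k(X, X∖Σ(L);R)` induced by the inclusion of pairs is non-trivial. -/
theorem exists_homology_class_with_nontrivial_image
    {R : Type} [CommRing R] [IsDomain R] [IsPrincipalIdealRing R]
    {G : Type} [AddCommGroup G] [Module R G] (T : GoodTheory R G)
    (𝕜 : Type) [RCLike 𝕜]
    (n : ℕ) (X : Type) [TopologicalSpace X] [T2Space X]
    [ChartedSpace (EuclideanSpace ℝ (Fin n)) X] [CompactSpace X]
    (hor : ROrientable T.toTheory n X)
    (V W : VB 𝕜 X) (hrank : Module.finrank 𝕜 V.F = Module.finrank 𝕜 W.F)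
    (L : ∀ x, V.E x →L[𝕜] W.E x) (hL : IsBundleMorphism V W L)
    (k : ℤ) (c : CharClass T 𝕜 k)
    (hc : c.cls X V - c.cls X W ∉ Set.range (T.betaMap X k)) :
    ∃ ξ : T.Hrel X (∅ : Set X) k, ξ ≠ 0 ∧
      T.pair X k (c.cls X V - c.cls X W) ξ ≠ 0 ∧
      T.hmap (ContinuousMap.id X) (Set.mapsTo_empty _ _) k ξ ≠
        (0 : T.Hrel X (singularSet V W L)ᶜ k) :=
  exists_homology_class_with_nontrivial_image_general T 𝕜 X V W L hL k c hc

end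
end
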